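/- arXiv:2410.19481 — 2 statements merged into one kernel-verified Lean document; each statement's English description precedes it below -/
import Mathlib

section
/- The piecewise switching function q(S,I) defined by q = 1 if S ≥ S̃̃ and I ≥ Ĩ̃; q = (4/π)·arctan((I - Ĩ)/(Ĩ̃ - Ĩ)) if I ≤ ((Ĩ̃-Ĩ)/(S̃̃-S̃))(S - S̃) + Ĩ and I < Ĩ̃; and q = (4/π)·arctan((S - S̃)/(S̃̃ - S̃)) otherwise, is Lipschitz on [S̃, N] × [Ĩ, N] with constant max{4/(π(Ĩ̃-Ĩ)), 4/(π(S̃̃-S̃))}. -/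
open Real

/-! In the normalized coordinates `u = (S - S̃)/(S̃̃ - S̃)` and `v = (I - Ĩ)/(Ĩ̃ - Ĩ)` the three
cases of `q` are exactly the three values of `min 1 (min u v)`, so
`q = (4/π) arctan (min 1 (min u v))` on all of `ℝ²` (using `arctan 1 = π/4`). Each of `arctan`,
`min` and the affine normalizations is Lipschitz, which gives the constant. -/

namespace Real

theorem lipschitzWith_arctan : LipschitzWith 1 arctan :=
  lipschitzWith_of_nnnorm_deriv_le differentiable_arctan fun x => by
    rw [deriv_arctan, ← NNReal.coe_le_coe, coe_nnnorm, norm_eq_abs, NNReal.coe_one,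
      abs_of_pos (by positivity), div_le_one (by positivity)]
    nlinarith [sq_nonneg x]

theorem abs_arctan_sub_arctan_le (x y : ℝ) : |arctan x - arctan y| ≤ |x - y| := by
  simpa [edist_dist] using! lipschitzWith_arctan x y

end Real

theorem min_min_eq_ite {α : Type*} [LinearOrder α] (c u v : α) :
    min c (min u v) = if c ≤ u ∧ c ≤ v then c else if v ≤ u ∧ v < c then v else u := by
  split_ifs with h₁ h₂
  · exact min_eq_left (le_min h₁.1 h₁.2)
  · rw [min_eq_right h₂.1, min_eq_right h₂.2.le]
  · grind

theorem abs_min_min_sub_min_min_le {α : Type*} [AddCommGroup α] [LinearOrder α]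
    [IsOrderedAddMonoid α] (c u v u' v' : α) :
    |min c (min u v) - min c (min u' v')| ≤ max |u - u'| |v - v'| :=
  calc |min c (min u v) - min c (min u' v')|
      ≤ max |c - c| |min u v - min u' v'| := abs_min_sub_min_le_max _ _ _ _
    _ = |min u v - min u' v'| := by simp
    _ ≤ max |u - u'| |v - v'| := abs_min_sub_min_le_max _ _ _ _

noncomputable def rescale (a b x : ℝ) : ℝ := (x - a) / (b - a)

section rescale

variable {a b : ℝ}

theorem one_le_rescale_iff (h : a < b) {x : ℝ} : 1 ≤ rescale a b x ↔ b ≤ x := by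
  rw [rescale, one_le_div (sub_pos.2 h)]
  exact sub_le_sub_iff_right a

theorem rescale_lt_one_iff (h : a < b) {x : ℝ} : rescale a b x < 1 ↔ x < b := by
  rw [rescale, div_lt_one (sub_pos.2 h)]
  exact sub_lt_sub_iff_right a

theorem abs_rescale_sub_rescale (h : a < b) (x y : ℝ) :
    |rescale a b x - rescale a b y| = |x - y| / (b - a) := by
  rw [rescale, rescale, div_sub_div_same, sub_sub_sub_cancel_right, abs_div,
    abs_of_pos (sub_pos.2 h)]

theorem le_diagonal_iff {c d : ℝ} (hab : a < b) (hcd : c < d) {x y : ℝ} :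
    y ≤ (d - c) / (b - a) * (x - a) + c ↔ rescale c d y ≤ rescale a b x := by
  rw [rescale, rescale, div_le_div_iff₀ (sub_pos.2 hcd) (sub_pos.2 hab), ← sub_le_iff_le_add,
    div_mul_eq_mul_div, le_div_iff₀ (sub_pos.2 hab), mul_comm (x - a)]

end rescale

theorem ite_eq_arctan_min_rescale {Sa Sb Ia Ib : ℝ} (hS : Sa < Sb) (hI : Ia < Ib) (s i : ℝ) :
    (if Sb ≤ s ∧ Ib ≤ i then 1
      else if i ≤ (Ib - Ia) / (Sb - Sa) * (s - Sa) + Ia ∧ i < Ib then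
        (4 / π) * arctan ((i - Ia) / (Ib - Ia))
      else (4 / π) * arctan ((s - Sa) / (Sb - Sa))) =
      (4 / π) * arctan (min 1 (min (rescale Sa Sb s) (rescale Ia Ib i))) := by
  simp only [min_min_eq_ite, one_le_rescale_iff hS, one_le_rescale_iff hI,
    rescale_lt_one_iff hI, ← le_diagonal_iff hS hI]
  split_ifs
  · rw [arctan_one]
    field_simp
  all_goals rfl

theorem switching_function_lipschitz_general
    (Stil Sttil Itil Ittil N : ℝ)
    (hS : Stil < Sttil)
    (hI : Itil < Ittil)
    (q : ℝ × ℝ → ℝ)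
    (hq : ∀ z : ℝ × ℝ, q z =
      if Sttil ≤ z.1 ∧ Ittil ≤ z.2 then 1
      else if z.2 ≤ (Ittil - Itil) / (Sttil - Stil) * (z.1 - Stil) + Itil
              ∧ z.2 < Ittil then
        (4 / π) * arctan ((z.2 - Itil) / (Ittil - Itil))
      else (4 / π) * arctan ((z.1 - Stil) / (Sttil - Stil))) :
    ∀ z ∈ Set.Icc (Stil, Itil) (N, N), ∀ z' ∈ Set.Icc (Stil, Itil) (N, N),
      |q z - q z'| ≤
        max (4 / (π * (Ittil - Itil))) (4 / (π * (Sttil - Stil))) * dist z z' := by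
  intro z _ z' _
  have hπ : 0 < 4 / π := by positivity
  rw [hq, hq, ite_eq_arctan_min_rescale hS hI, ite_eq_arctan_min_rescale hS hI, ← mul_sub,
    abs_mul, abs_of_pos hπ, Prod.dist_eq, Real.dist_eq, Real.dist_eq]
  calc 4 / π * |arctan (min 1 (min (rescale Stil Sttil z.1) (rescale Itil Ittil z.2))) -
        arctan (min 1 (min (rescale Stil Sttil z'.1) (rescale Itil Ittil z'.2)))|
      ≤ 4 / π * max |rescale Stil Sttil z.1 - rescale Stil Sttil z'.1|
          |rescale Itil Ittil z.2 - rescale Itil Ittil z'.2| := by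
        gcongr
        exact (abs_arctan_sub_arctan_le _ _).trans (abs_min_min_sub_min_min_le _ _ _ _ _)
    _ = max (4 / (π * (Sttil - Stil)) * |z.1 - z'.1|)
          (4 / (π * (Ittil - Itil)) * |z.2 - z'.2|) := by
        rw [abs_rescale_sub_rescale hS, abs_rescale_sub_rescale hI, mul_max_of_nonneg _ _ hπ.le]
        congr 1 <;> field_simp
    _ ≤ _ := max_le
        (mul_le_mul (le_max_right _ _) (le_max_left _ _) (abs_nonneg _) (by positivity))
        (mul_le_mul (le_max_left _ _) (le_max_right _ _) (abs_nonneg _) (by positivity))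

/-- the piecewise switching function q is Lipschitz on the
rectangle [S̃, N] × [Ĩ, N] with constant max{4/(π(Ĩ̃-Ĩ)), 4/(π(S̃̃-S̃))}. -/
theorem switching_function_lipschitz
    (Stil Sttil Itil Ittil N : ℝ)
    (hS : Stil < Sttil) (hSN : Sttil ≤ N)
    (hI : Itil < Ittil) (hIN : Ittil ≤ N)
    (q : ℝ × ℝ → ℝ)
    (hq : ∀ z : ℝ × ℝ, q z =
      if Sttil ≤ z.1 ∧ Ittil ≤ z.2 then 1
      else if z.2 ≤ (Ittil - Itil) / (Sttil - Stil) * (z.1 - Stil) + Itil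
              ∧ z.2 < Ittil then
        (4 / π) * arctan ((z.2 - Itil) / (Ittil - Itil))
      else (4 / π) * arctan ((z.1 - Stil) / (Sttil - Stil))) :
    ∀ z ∈ Set.Icc (Stil, Itil) (N, N), ∀ z' ∈ Set.Icc (Stil, Itil) (N, N),
      |q z - q z'| ≤
        max (4 / (π * (Ittil - Itil))) (4 / (π * (Sttil - Stil))) * dist z z' :=
  switching_function_lipschitz_general Stil Sttil Itil Ittil N hS hI q hq
end

section
/- Under the parameter choice α₂ᵏ = γ_{R_k}+γ_{D_k}+Γ+Σ_j M_{kj} and α₁ᵏ > (γ_{R_k}+γ_{D_k})(Γ + Σ_j M_{kj}), where Γ = max_k(γ_{R_k}+γ_{D_k}) and λ ≤ 1, the quantity θ̃_k = -v_k + L_f²h_k evaluated at any state x with S_j ∈ [0, N_j] and I_j ∈ [0, N_j] for all j satisfies θ̃_k(x) ≥ 0. Concretely: λS_k Σ_j C_{kj}(λS_j Σ_l C_{jl}I_l) + (1-λ)(Σ_j C_{kj}I_j)(Σ_j M_{kj}) ≥ 0, and the full chain of inequalities in the proof of Theorem 2 reduces θ̃_k to a sum of nonnegative terms. -/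
open Finset

/-- nonnegativity of θ̃_k under the parameter choices of Theorem 2. -/
theorem feedback_nonnegative
    (n : ℕ) (lam Γ α₁ α₂ : ℝ)
    (M : Fin n → Fin n → ℝ) (N γR γD S I : Fin n → ℝ) (k : Fin n)
    (hlam : 0 < lam) (hlam1 : lam ≤ 1)
    (hM : ∀ j l, 0 ≤ M j l) (hN : ∀ j, 0 < N j)
    (hγR : ∀ j, 0 ≤ γR j) (hγD : ∀ j, 0 ≤ γD j)
    (hS : ∀ j, 0 ≤ S j ∧ S j ≤ N j) (hI : ∀ j, 0 ≤ I j ∧ I j ≤ N j)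
    (hΓ : IsGreatest (Set.range fun j => γR j + γD j) Γ)
    (hα₂ : α₂ = γR k + γD k + Γ + ∑ j, M k j)
    (hα₁ : (γR k + γD k) * (Γ + ∑ j, M k j) < α₁) :
    0 ≤ lam * S k * (∑ j, (M k j / N j) * (lam * S j * ∑ l, (M j l / N l) * I l))
        + (1 - lam) * (∑ j, (M k j / N j) * I j) * (∑ j, M k j) ∧
    0 ≤ lam * S k *
          (∑ j, (M k j / N j) *
            (lam * S j * (∑ l, (M j l / N l) * I l) - (γR j + γD j) * I j))
        - (γR k + γD k) *
            (lam * S k * (∑ j, (M k j / N j) * I j) - (γR k + γD k) * I k)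
        + lam * (-(lam * S k * (∑ j, (M k j / N j) * I j))) *
            (∑ j, (M k j / N j) * I j)
        + α₂ * (lam * S k * (∑ j, (M k j / N j) * I j) - (γR k + γD k) * I k)
        + α₁ * I k := by
  have hc : ∀ j, 0 ≤ M k j / N j := fun j => div_nonneg (hM k j) (hN j).le
  have hBnn : 0 ≤ ∑ j, (M k j / N j) * I j :=
    Finset.sum_nonneg fun j _ => mul_nonneg (hc j) (hI j).1
  set B := ∑ j, (M k j / N j) * I j with hBdef
  set Mk := ∑ j, M k j with hMkdef
  have hMknn : 0 ≤ Mk := Finset.sum_nonneg fun j _ => hM k j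
  have hBM : B ≤ Mk := by
    apply Finset.sum_le_sum
    intro j _
    calc (M k j / N j) * I j ≤ (M k j / N j) * N j :=
          mul_le_mul_of_nonneg_left (hI j).2 (hc j)
      _ = M k j := div_mul_cancel₀ _ (hN j).ne'
  have hΓnn : 0 ≤ Γ := le_trans (add_nonneg (hγR k) (hγD k)) (hΓ.2 ⟨k, rfl⟩)
  have hγΓ : ∀ j, γR j + γD j ≤ Γ := fun j => hΓ.2 ⟨j, rfl⟩
  have hγknn : 0 ≤ γR k + γD k := add_nonneg (hγR k) (hγD k)
  have hinner : ∀ j, 0 ≤ lam * S j * ∑ l, (M j l / N l) * I l := by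
    intro j
    exact mul_nonneg (mul_nonneg hlam.le (hS j).1)
      (Finset.sum_nonneg fun l _ =>
        mul_nonneg (div_nonneg (hM j l) (hN l).le) (hI l).1)
  constructor
  · have h1 : 0 ≤ lam * S k * ∑ j, (M k j / N j) *
        (lam * S j * ∑ l, (M j l / N l) * I l) :=
      mul_nonneg (mul_nonneg hlam.le (hS k).1)
        (Finset.sum_nonneg fun j _ => mul_nonneg (hc j) (hinner j))
    have h2 : 0 ≤ (1 - lam) * B * Mk :=
      mul_nonneg (mul_nonneg (by linarith) hBnn) hMknn
    linarith
  · -- lower bound on the sum ∑ c_j f_j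
    have hS1 : -(Γ * B) ≤ ∑ j, (M k j / N j) *
        (lam * S j * (∑ l, (M j l / N l) * I l) - (γR j + γD j) * I j) := by
      have : ∑ j, -(Γ * ((M k j / N j) * I j)) ≤ ∑ j, (M k j / N j) *
          (lam * S j * (∑ l, (M j l / N l) * I l) - (γR j + γD j) * I j) := by
        apply Finset.sum_le_sum
        intro j _
        have h1 : (γR j + γD j) * ((M k j / N j) * I j) ≤
            Γ * ((M k j / N j) * I j) :=
          mul_le_mul_of_nonneg_right (hγΓ j) (mul_nonneg (hc j) (hI j).1)
        have h2 : 0 ≤ (M k j / N j) * (lam * S j * ∑ l, (M j l / N l) * I l) :=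
          mul_nonneg (hc j) (hinner j)
        nlinarith [h1, h2]
      calc -(Γ * B) = ∑ j, -(Γ * ((M k j / N j) * I j)) := by
            rw [hBdef, Finset.mul_sum, ← Finset.sum_neg_distrib]
        _ ≤ _ := this
    set S1 := ∑ j, (M k j / N j) *
        (lam * S j * (∑ l, (M j l / N l) * I l) - (γR j + γD j) * I j)
    have hlB : lam * B ≤ Mk := le_trans (by nlinarith) hBM
    have key1 : 0 ≤ lam * S k * (S1 + Γ * B) :=
      mul_nonneg (mul_nonneg hlam.le (hS k).1) (by linarith)
    have key2 : 0 ≤ (lam * S k * B) * (Mk - lam * B) :=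
      mul_nonneg (mul_nonneg (mul_nonneg hlam.le (hS k).1) hBnn) (by linarith)
    have key3 : 0 ≤ (α₁ - (γR k + γD k) * (Γ + Mk)) * I k :=
      mul_nonneg (by linarith) (hI k).1
    subst hα₂
    nlinarith [key1, key2, key3]
end
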